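/- arXiv:2411.19833 — 4 statements merged into one kernel-verified Lean document; each statement's English description precedes it below -/
import Mathlib

section
/- Let S = {H_1, ..., H_k} be an antichain of k ≥ 2 subsets of [n], let G ⊊ H_i for some i, and suppose |G| < n - k. Then there exists a set K ⊆ [n] with |K| = n - k, G ⊆ K, and H_j ⊄ K for all j = 1, ..., k. -/
/-- If S is an antichain of k ≥ 2 subsets of [n], G is a proper subset of some member
of S and |G| < n - k, then there is an (n-k)-set K containing G that contains no
member of S. -/
theorem stmt8 (n k : ℕ) (hk : 2 ≤ k) (S : Finset (Finset (Fin n)))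
    (hS : S.card = k) (hanti : IsAntichain (· ⊆ ·) (S : Set (Finset (Fin n))))
    (G H : Finset (Fin n)) (hH : H ∈ S) (hG : G ⊂ H) (hGcard : G.card < n - k) :
    ∃ K : Finset (Fin n), K.card = n - k ∧ G ⊆ K ∧ ∀ H' ∈ S, ¬ H' ⊆ K := by
  classical
  -- every member of S has an element outside G
  have hne : ∀ H' ∈ S, (H' \ G).Nonempty := by
    intro H' hH'
    rw [Finset.sdiff_nonempty]
    intro hsub
    have hHG : H' ⊆ H := hsub.trans hG.subset
    by_cases h : H' = H
    · subst h
      exact hG.ne (le_antisymm hsub hG.subset).symm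
    · exact hanti hH' hH h hHG
  -- choice of one such element per member
  set f : ∀ H' ∈ S, Fin n := fun H' h => (hne H' h).choose with hf
  have hfmem : ∀ H' (h : H' ∈ S), f H' h ∈ H' \ G := fun H' h => (hne H' h).choose_spec
  set T : Finset (Fin n) := S.attach.image (fun p => f p.1 p.2) with hT
  have hTsub : T ⊆ Gᶜ := by
    intro x hx
    rw [hT, Finset.mem_image] at hx
    obtain ⟨p, _, rfl⟩ := hx
    have := hfmem p.1 p.2
    rw [Finset.mem_sdiff] at this
    simpa using this.2
  have hTcard : T.card ≤ k := le_trans Finset.card_image_le (by simp [hS])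
  have hkle : k ≤ Gᶜ.card := by
    rw [Finset.card_compl, Fintype.card_fin]
    omega
  obtain ⟨T', hTT', hT'G, hT'card⟩ :=
    Finset.exists_subsuperset_card_eq hTsub hTcard hkle
  refine ⟨T'ᶜ, ?_, ?_, ?_⟩
  · rw [Finset.card_compl, Fintype.card_fin, hT'card]
  · intro x hx
    rw [Finset.mem_compl]
    intro hxT'
    have := hT'G hxT'
    rw [Finset.mem_compl] at this
    exact this hx
  · intro H' hH' hsub
    have hx := hfmem H' hH'
    rw [Finset.mem_sdiff] at hx
    have hxT : f H' hH' ∈ T := by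
      rw [hT, Finset.mem_image]
      exact ⟨⟨H', hH'⟩, Finset.mem_attach _ _, rfl⟩
    have := hsub hx.1
    rw [Finset.mem_compl] at this
    exact this (hTT' hxT)
end

section
/- Let F = {F_1, ..., F_m} be a family of m subsets of [n], and let A be the set of elements contained in at least two members of F, with a = |A| ≥ 1. Then every minimal cover of F that intersects A has size at most m - 1. -/
/-- A is a cover of the family F if it intersects every member of F. -/
def Cover {n : ℕ} (F : Finset (Finset (Fin n))) (A : Finset (Fin n)) : Prop :=
  ∀ F' ∈ F, (A ∩ F').Nonempty

/-- A is a minimal cover of F if it is a cover but no proper subset of it is. -/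
def MinCover {n : ℕ} (F : Finset (Finset (Fin n))) (A : Finset (Fin n)) : Prop :=
  Cover F A ∧ ∀ B ⊂ A, ¬ Cover F B

/-!
Minimality gives every `x ∈ C` a private member `F_x ∈ F` with `C ∩ F_x = {x}`. The map
`x ↦ F_x` is injective, and for `x ≠ c` the set `F_x` avoids `c`. So `|C| - 1` is at most
the number of members of `F` missing `c`, which is at most `m - 2` when `c ∈ A`.
-/

open Finset

theorem MinCover.exists_inter_eq_singleton {n : ℕ} {F : Finset (Finset (Fin n))}
    {C : Finset (Fin n)} (hC : MinCover F C) {x : Fin n} (hx : x ∈ C) :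
    ∃ F' ∈ F, C ∩ F' = {x} := by
  obtain ⟨F', hF', hempty⟩ : ∃ F' ∈ F, ¬ (C.erase x ∩ F').Nonempty := by
    simpa [Cover] using hC.2 _ (erase_ssubset hx)
  rw [not_nonempty_iff_eq_empty, erase_inter, erase_eq_empty_iff] at hempty
  exact ⟨F', hF', hempty.resolve_left (hC.1 F' hF').ne_empty⟩

theorem MinCover.card_add_card_filter_mem_le {n : ℕ} {F : Finset (Finset (Fin n))}
    {C : Finset (Fin n)} (hC : MinCover F C) {c : Fin n} (hc : c ∈ C) :
    #C + #(F.filter (c ∈ ·)) ≤ #F + 1 := by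
  choose! f hfF hf using fun x (hx : x ∈ C) => hC.exists_inter_eq_singleton hx
  have hmaps : ∀ x ∈ C.erase c, f x ∈ F.filter (c ∉ ·) := by
    intro x hx
    obtain ⟨hxc, hxC⟩ := mem_erase.1 hx
    refine mem_filter.2 ⟨hfF x hxC, fun hcf => hxc ?_⟩
    have : c ∈ C ∩ f x := mem_inter.2 ⟨hc, hcf⟩
    rw [hf x hxC, mem_singleton] at this
    exact this.symm
  have hinj : Set.InjOn f (C.erase c) := fun x hx y hy hxy =>
    singleton_injective <| by
      rw [← hf x (mem_of_mem_erase hx), hxy, hf y (mem_of_mem_erase hy)]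
  have hle := card_le_card_of_injOn f hmaps hinj
  rw [card_erase_of_mem hc] at hle
  have hsplit := card_filter_add_card_filter_not (s := F) (c ∈ ·)
  have hCpos := card_pos.2 ⟨c, hc⟩
  omega

theorem stmt12_general (n m : ℕ) (F : Finset (Finset (Fin n))) (hm : F.card = m)
    (A : Finset (Fin n))
    (hA : A = Finset.univ.filter (fun x => 1 < (F.filter (fun F' => x ∈ F')).card))
    (C : Finset (Fin n)) (hC : MinCover F C) (hCA : (C ∩ A).Nonempty) :
    C.card ≤ m - 1 := by
  obtain ⟨c, hc⟩ := hCA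
  obtain ⟨hcC, hcA⟩ := mem_inter.1 hc
  have hdeg : 1 < #(F.filter (c ∈ ·)) := by
    subst hA
    simpa using hcA
  have := hC.card_add_card_filter_mem_le hcC
  omega

/-- Let F be a family of m subsets of [n] and A the set of elements lying in at least
two members of F, with |A| ≥ 1. Then every minimal cover of F meeting A has size at
most m - 1. -/
theorem stmt12 (n m : ℕ) (F : Finset (Finset (Fin n))) (hm : F.card = m)
    (A : Finset (Fin n))
    (hA : A = Finset.univ.filter (fun x => 1 < (F.filter (fun F' => x ∈ F')).card))
    (ha : 1 ≤ A.card)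
    (C : Finset (Fin n)) (hC : MinCover F C) (hCA : (C ∩ A).Nonempty) :
    C.card ≤ m - 1 :=
  stmt12_general n m F hm A hA C hC hCA
end

section
/- Let n ≥ 3 and 1 < k < n. Let A_0 be a subset of [n] with n-k ≤ |A_0| ≤ n-2, write ℓ = n - |A_0|, pick w ∈ [n] \ A_0, x ∈ A_0, and enumerate [n] \ A_0 = {w, w_1, ..., w_{ℓ-1}}. Then the families S = {A_0, A_0 \ {x} ∪ {w_1}, ..., A_0 \ {x} ∪ {w_{ℓ-1}}} and S' obtained from S by replacing A_0 with A_0 ∪ {w} are both antichains, and for every set Q ⊆ [n] with Q ≠ A_0, Q contains a member of S if and only if Q contains a member of S'; i.e., the two antichains give the same answer on every query except A_0 itself. -/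
/-- Lower bound gadget for the non-adaptive case, 1 < k < n: with A₀ of size between
n-k and n-2, w ∉ A₀, x ∈ A₀, and W = complement of A₀ minus w, the families
S = {A₀} ∪ {A₀ \ {x} ∪ {wᵢ} : wᵢ ∈ W} and S' obtained by replacing A₀ with A₀ ∪ {w}
are both antichains and give the same answer on every query Q ≠ A₀. -/
theorem stmt17 (n k : ℕ) (hn : 3 ≤ n) (hk1 : 1 < k) (hkn : k < n)
    (A0 : Finset (Fin n)) (h1 : n - k ≤ A0.card) (h2 : A0.card ≤ n - 2)
    (w : Fin n) (hw : w ∉ A0) (x : Fin n) (hx : x ∈ A0) :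
    let W : Finset (Fin n) := A0ᶜ.erase w
    let S : Finset (Finset (Fin n)) :=
      insert A0 (W.image (fun wi => insert wi (A0.erase x)))
    let S' : Finset (Finset (Fin n)) :=
      insert (insert w A0) (W.image (fun wi => insert wi (A0.erase x)))
    IsAntichain (· ⊆ ·) (S : Set (Finset (Fin n))) ∧
    IsAntichain (· ⊆ ·) (S' : Set (Finset (Fin n))) ∧
    ∀ Q : Finset (Fin n), Q ≠ A0 →
      ((∃ B ∈ S, B ⊆ Q) ↔ (∃ B ∈ S', B ⊆ Q)) := by
  intro W S S'
  have hWi : ∀ wi ∈ W, wi ∉ A0 ∧ wi ≠ w := by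
    intro wi hwi
    simp only [W, Finset.mem_erase, Finset.mem_compl] at hwi
    exact ⟨hwi.2, hwi.1⟩
  refine ⟨?_, ?_, ?_⟩
  · intro B hB C hC hne hsub
    simp only [S, Finset.coe_insert, Set.mem_insert_iff, Finset.coe_image,
      Set.mem_image, Finset.mem_coe] at hB hC
    rcases hB with rfl | ⟨a, ha, rfl⟩ <;> rcases hC with rfl | ⟨b, hb, rfl⟩
    · exact hne rfl
    · rcases Finset.mem_insert.mp (hsub hx) with h | h
      · exact (hWi b hb).1 (h ▸ hx)
      · exact (Finset.mem_erase.mp h).1 rfl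
    · exact (hWi a ha).1 (hsub (Finset.mem_insert_self a _))
    · rcases Finset.mem_insert.mp (hsub (Finset.mem_insert_self a _)) with h | h
      · exact hne (by rw [h])
      · exact (hWi a ha).1 (Finset.mem_of_mem_erase h)
  · intro B hB C hC hne hsub
    simp only [S', Finset.coe_insert, Set.mem_insert_iff, Finset.coe_image,
      Set.mem_image, Finset.mem_coe] at hB hC
    rcases hB with rfl | ⟨a, ha, rfl⟩ <;> rcases hC with rfl | ⟨b, hb, rfl⟩
    · exact hne rfl
    · rcases Finset.mem_insert.mp (hsub (Finset.mem_insert_self w _)) with h | h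
      · exact (hWi b hb).2 h.symm
      · exact hw (Finset.mem_of_mem_erase h)
    · rcases Finset.mem_insert.mp (hsub (Finset.mem_insert_self a _)) with h | h
      · exact (hWi a ha).2 h
      · exact (hWi a ha).1 h
    · rcases Finset.mem_insert.mp (hsub (Finset.mem_insert_self a _)) with h | h
      · exact hne (by rw [h])
      · exact (hWi a ha).1 (Finset.mem_of_mem_erase h)
  · intro Q hQ
    constructor
    · rintro ⟨B, hB, hBQ⟩
      simp only [S, Finset.mem_insert, Finset.mem_image] at hB
      rcases hB with rfl | ⟨a, ha, rfl⟩
      · -- B ⊆ Q with B = A0, Q ≠ A0: get y ∈ Q \ A0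
        have hss : B ⊂ Q := hBQ.ssubset_of_ne (fun h => hQ h.symm)
        obtain ⟨y, hyQ, hyB⟩ := Finset.exists_of_ssubset hss
        by_cases hyw : y = w
        · refine ⟨insert w B, Finset.mem_insert_self _ _, ?_⟩
          exact Finset.insert_subset (hyw ▸ hyQ) hBQ
        · refine ⟨insert y (B.erase x), ?_, ?_⟩
          · exact Finset.mem_insert_of_mem (Finset.mem_image_of_mem _
              (Finset.mem_erase.mpr ⟨hyw, Finset.mem_compl.mpr hyB⟩))
          · exact Finset.insert_subset hyQ ((Finset.erase_subset _ _).trans hBQ)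
      · exact ⟨_, Finset.mem_insert_of_mem (Finset.mem_image_of_mem _ ha), hBQ⟩
    · rintro ⟨B, hB, hBQ⟩
      simp only [S', Finset.mem_insert, Finset.mem_image] at hB
      rcases hB with rfl | ⟨a, ha, rfl⟩
      · exact ⟨A0, Finset.mem_insert_self _ _,
          (Finset.subset_insert _ _).trans hBQ⟩
      · exact ⟨_, Finset.mem_insert_of_mem (Finset.mem_image_of_mem _ ha), hBQ⟩
end

section
/- For n > k ≥ 3, any adaptive strategy identifying the hidden k-element antichain requires at least ∏_{i=1}^{k-1} ⌊(n+i-1)/(k-1)⌋ - 1 queries, even when the first k-1 members of the antichain are revealed to be a balanced partition of [n] into k-1 parts. -/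
/-- The list of answers produced by an adaptive strategy `strat` (mapping answer
histories to queries) after q queries, when the hidden antichain is S: a query Q is
answered `true` iff some member of S is contained in Q. -/
def answers {n : ℕ} (S : Finset (Finset (Fin n)))
    (strat : List Bool → Finset (Fin n)) : ℕ → List Bool
  | 0 => []
  | q + 1 =>
      answers S strat q ++ [decide (∃ H ∈ S, H ⊆ strat (answers S strat q))]

/-- The adversary's answer sequence: answer a query YES iff it contains one of the
revealed parts `H i` (so the answer is forced regardless of the hidden set). -/
def advAns {n m : ℕ} (H : Fin m → Finset (Fin n))
    (strat : List Bool → Finset (Fin n)) : ℕ → List Bool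
  | 0 => []
  | t + 1 =>
      advAns H strat t ++ [decide (∃ i, H i ⊆ strat (advAns H strat t))]

/-- Adaptive lower bound: let n > k ≥ 3 and let H 0, ..., H (k-2) be a balanced
partition of [n] with |H i| = ⌊(n+i)/(k-1)⌋. If an adaptive strategy with q queries
identifies the hidden k-member antichain {H 0,...,H (k-2), Cᶜ} (C an arbitrary
minimal cover of the partition) — i.e., some guess function recovers Cᶜ from the
answers — then q ≥ ∏_{i=0}^{k-2} ⌊(n+i)/(k-1)⌋ - 1. -/
theorem stmt18 (n k : ℕ) (hk : 3 ≤ k) (hkn : k < n)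
    (H : Fin (k - 1) → Finset (Fin n))
    (hdisj : ∀ i j, i ≠ j → Disjoint (H i) (H j))
    (hunion : Finset.univ.sup H = (Finset.univ : Finset (Fin n)))
    (hcard : ∀ i : Fin (k - 1), (H i).card = (n + (i : ℕ)) / (k - 1))
    (strat : List Bool → Finset (Fin n)) (guess : List Bool → Finset (Fin n))
    (q : ℕ)
    (hid : ∀ C : Finset (Fin n), MinCover (Finset.image H Finset.univ) C →
      guess (answers (insert Cᶜ (Finset.image H Finset.univ)) strat q) = Cᶜ) :
    (∏ i ∈ Finset.range (k - 1), (n + i) / (k - 1)) - 1 ≤ q := by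
  by_contra hcon
  push_neg at hcon
  rw [Nat.lt_sub_iff_add_lt] at hcon
  -- hcon : q + 1 < ∏ i in range (k-1), (n+i)/(k-1)
  have hk1 : 0 < k - 1 := by omega
  set F : Finset (Finset (Fin n)) := Finset.image H Finset.univ with hF
  -- T : the set of transversals of the partition
  set T : Finset (Finset (Fin n)) :=
    (Finset.univ.pi fun i : Fin (k - 1) => H i).image
      (fun f => Finset.univ.image fun i => f i (Finset.mem_univ i)) with hT
  have hmemH : ∀ x : Fin n, ∃ i, x ∈ H i := by
    intro x
    have hx : x ∈ Finset.univ.sup H := by rw [hunion]; exact Finset.mem_univ x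
    simpa [Finset.mem_sup] using hx
  -- the image of a transversal function meets each part in exactly one point
  have hsingf : ∀ f ∈ Finset.univ.pi (fun i : Fin (k - 1) => H i), ∀ i,
      (Finset.univ.image fun j => f j (Finset.mem_univ j)) ∩ H i
        = {f i (Finset.mem_univ i)} := by
    intro f hf i
    ext x
    simp only [Finset.mem_inter, Finset.mem_image, Finset.mem_singleton,
      Finset.mem_univ, true_and]
    constructor
    · rintro ⟨⟨j, rfl⟩, hx⟩
      have hj : f j (Finset.mem_univ j) ∈ H j := (Finset.mem_pi.mp hf) j (Finset.mem_univ j)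
      by_contra hne
      have hji : j = i := by
        by_contra hji
        exact (Finset.disjoint_left.mp (hdisj j i hji)) hj hx
      exact hne (by subst hji; rfl)
    · rintro rfl
      exact ⟨⟨i, rfl⟩, (Finset.mem_pi.mp hf) i (Finset.mem_univ i)⟩
  have hsing : ∀ C ∈ T, ∀ i, ∃ a ∈ H i, C ∩ H i = {a} := by
    intro C hC i
    rw [hT, Finset.mem_image] at hC
    obtain ⟨f, hf, rfl⟩ := hC
    exact ⟨f i (Finset.mem_univ i), (Finset.mem_pi.mp hf) i (Finset.mem_univ i),
      hsingf f hf i⟩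
  -- counting transversals
  have hTcard : T.card = ∏ i ∈ Finset.range (k - 1), (n + i) / (k - 1) := by
    rw [hT, Finset.card_image_of_injOn, Finset.card_pi]
    · have : ∀ i : Fin (k - 1), (H i).card = (n + (i : ℕ)) / (k - 1) := hcard
      calc (∏ i : Fin (k - 1), (H i).card)
          = ∏ i : Fin (k - 1), (n + (i : ℕ)) / (k - 1) := by
            exact Finset.prod_congr rfl (fun i _ => hcard i)
        _ = ∏ i ∈ Finset.range (k - 1), (n + i) / (k - 1) := by
            exact Fin.prod_univ_eq_prod_range (fun i => (n + i) / (k - 1)) (k - 1)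
    · intro f hf g hg hfg
      dsimp only at hfg
      funext i hi
      have h1 : g i (Finset.mem_univ i) ∈
          (Finset.univ.image fun j => g j (Finset.mem_univ j)) ∩ H i := by
        rw [hsingf g hg i]; exact Finset.mem_singleton_self _
      rw [← hfg, hsingf f hf i] at h1
      exact (Finset.mem_singleton.mp h1).symm
  -- transversals are minimal covers
  have hmin : ∀ C ∈ T, MinCover F C := by
    intro C hC
    constructor
    · intro F' hF'
      rw [hF, Finset.mem_image] at hF'
      obtain ⟨i, -, rfl⟩ := hF'
      obtain ⟨a, ha, hCi⟩ := hsing C hC i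
      exact ⟨a, by rw [hCi]; exact Finset.mem_singleton_self a⟩
    · intro B hB hcov
      obtain ⟨c, hcC, hcB⟩ := Finset.exists_of_ssubset hB
      obtain ⟨i, hci⟩ := hmemH c
      obtain ⟨a, ha, hCi⟩ := hsing C hC i
      have hca : c = a := by
        have : c ∈ C ∩ H i := Finset.mem_inter.mpr ⟨hcC, hci⟩
        simpa [hCi] using this
      obtain ⟨x, hx⟩ := hcov (H i) (Finset.mem_image_of_mem H (Finset.mem_univ i))
      rw [Finset.mem_inter] at hx
      have hxC : x ∈ C := hB.1 hx.1
      have hxa : x = a := by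
        have : x ∈ C ∩ H i := Finset.mem_inter.mpr ⟨hxC, hx.2⟩
        simpa [hCi] using this
      apply hcB
      rw [hca, ← hxa]
      exact hx.1
  -- key lemma: a non-forced query contains Cᶜ only when C = Qᶜ
  have hkey : ∀ C ∈ T, ∀ Q : Finset (Fin n), (∀ i, ¬ H i ⊆ Q) → Cᶜ ⊆ Q → C = Qᶜ := by
    intro C hC Q hQ hsub
    have hQC : Qᶜ ⊆ C := by
      intro x hx
      by_contra hxC
      exact (Finset.mem_compl.mp hx) (hsub (Finset.mem_compl.mpr hxC))
    refine Finset.Subset.antisymm ?_ hQC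
    intro c hc
    obtain ⟨i, hci⟩ := hmemH c
    obtain ⟨a, ha, hCi⟩ := hsing C hC i
    have hca : c = a := by
      have : c ∈ C ∩ H i := Finset.mem_inter.mpr ⟨hc, hci⟩
      simpa [hCi] using this
    obtain ⟨x, hxH, hxQ⟩ := Finset.not_subset.mp (hQ i)
    have hxQc : x ∈ Qᶜ := Finset.mem_compl.mpr hxQ
    have hxa : x = a := by
      have : x ∈ C ∩ H i := Finset.mem_inter.mpr ⟨hQC hxQc, hxH⟩
      simpa [hCi] using this
    rw [hca, ← hxa]
    exact hxQc
  -- eliminated candidates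
  set E : Finset (Finset (Fin n)) :=
    (Finset.range q).image (fun t => (strat (advAns H strat t))ᶜ) with hE
  have hEcard : E.card ≤ q := le_trans Finset.card_image_le (by simp)
  -- surviving transversals follow the adversary answer sequence
  have main : ∀ C ∈ T, C ∉ E → ∀ t, t ≤ q →
      answers (insert Cᶜ F) strat t = advAns H strat t := by
    intro C hC hCE t
    induction t with
    | zero => intro _; rfl
    | succ t ih =>
      intro ht
      have ih' := ih (by omega)
      rw [answers, advAns, ih']
      have hbit : (∃ H' ∈ insert Cᶜ F, H' ⊆ strat (advAns H strat t)) ↔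
          (∃ i, H i ⊆ strat (advAns H strat t)) := by
        constructor
        · rintro ⟨H', hH', hsub⟩
          rcases Finset.mem_insert.mp hH' with rfl | hH'
          · by_contra hno
            push_neg at hno
            have hCQ : C = (strat (advAns H strat t))ᶜ := hkey C hC _ hno hsub
            exact absurd (Finset.mem_image.mpr
              ⟨t, Finset.mem_range.mpr (by omega), hCQ.symm⟩) hCE
          · rw [hF, Finset.mem_image] at hH'
            obtain ⟨i, -, rfl⟩ := hH'
            exact ⟨i, hsub⟩
        · rintro ⟨i, hi⟩
          exact ⟨H i, Finset.mem_insert_of_mem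
            (Finset.mem_image_of_mem H (Finset.mem_univ i)), hi⟩
      rw [decide_eq_decide.mpr hbit]
  -- two surviving transversals
  have hTE : 1 < (T \ E).card := by
    have h1 : T.card - E.card ≤ (T \ E).card := Finset.le_card_sdiff E T
    omega
  obtain ⟨C, hC, C', hC', hne⟩ := Finset.one_lt_card.mp hTE
  rw [Finset.mem_sdiff] at hC hC'
  have e1 := hid C (hmin C hC.1)
  have e2 := hid C' (hmin C' hC'.1)
  rw [main C hC.1 hC.2 q le_rfl] at e1
  rw [main C' hC'.1 hC'.2 q le_rfl] at e2
  exact hne (compl_injective (e1 ▸ e2 ▸ rfl))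
end
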